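/- The function f̃₁(x) := ((3x − 2)/(x − 2)) · (1 − 2/x)^x is strictly increasing in the real variable x on (3, ∞) (in fact on (2, ∞) restricted to x ≥ 3), with f̃₁(3) = 7/27. In particular, f̃₁(x) ≥ 7/27 > 1/4 for all real x ≥ 3. -/

import Mathlib

/-!
Writing `u = x / (x - 2) > 1`, the derivative of `f̃₁` is `(1 - 2/x)^x` times
`-4/(x-2)² + (3x-2)/(x-2) · (2/(x-2) - log u)`. The bound `log u < sinh (log u) = (u - u⁻¹)/2`
bounds the second factor from below by `2/(x(x-2)) > 0`, so `f̃₁` increases on all of `(2, ∞)`.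
At `x = 3` one has `(1 - 2/3)^3 = 1/27`.
-/

/-- The function `f̃₁(x) = ((3x-2)/(x-2)) (1 - 2/x)^x` (with real exponent, i.e.
`(1-2/x)^x = exp(x ln(1-2/x))`). -/
noncomputable def fTilde (x : ℝ) : ℝ := ((3 * x - 2) / (x - 2)) * Real.exp (x * Real.log (1 - 2 / x))

open Real Set

lemma Real.log_lt_sub_inv_div_two {u : ℝ} (hu : 1 < u) : log u < (u - u⁻¹) / 2 := by
  rw [← sinh_log (by linarith)]
  exact self_lt_sinh_iff.mpr (log_pos hu)

lemma neg_two_mul_sub_one_div_lt_log_one_sub_two_div {x : ℝ} (hx : 2 < x) :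
    -(2 * (x - 1) / (x * (x - 2))) < log (1 - 2 / x) := by
  have hx2 : 0 < x - 2 := by linarith
  have hu : 1 < x / (x - 2) := (one_lt_div hx2).mpr (by linarith)
  have hinv : (x / (x - 2))⁻¹ = 1 - 2 / x := by
    rw [inv_div]; field_simp
  have hhalf : (x / (x - 2) - (x / (x - 2))⁻¹) / 2 = 2 * (x - 1) / (x * (x - 2)) := by
    rw [hinv]; field_simp; ring
  have hlog := hhalf ▸ log_lt_sub_inv_div_two hu
  rw [← hinv, log_inv]
  linarith

lemma hasDerivAt_fTilde {x : ℝ} (hx : 2 < x) :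
    HasDerivAt fTilde
      (exp (x * log (1 - 2 / x)) *
        (-4 / (x - 2) ^ 2 + (3 * x - 2) / (x - 2) * (log (1 - 2 / x) + 2 / (x - 2)))) x := by
  have hx0 : x ≠ 0 := by linarith
  have hx2 : x - 2 ≠ 0 := by linarith
  have hbase : 1 - 2 / x ≠ 0 := by
    have : 2 / x < 1 := (div_lt_one (by linarith)).mpr hx
    linarith
  have hrat : HasDerivAt (fun y => (3 * y - 2) / (y - 2))
      ((3 * 1 * (x - 2) - (3 * x - 2) * 1) / (x - 2) ^ 2) x :=
    (((hasDerivAt_id' x).const_mul 3).sub_const 2).div ((hasDerivAt_id' x).sub_const 2) hx2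
  have hbase' : HasDerivAt (fun y => 1 - 2 / y) (0 - (0 * x - 2 * 1) / x ^ 2) x :=
    (hasDerivAt_const x 1).sub ((hasDerivAt_const x 2).div (hasDerivAt_id' x) hx0)
  refine (hrat.mul ((hasDerivAt_id' x).mul (hbase'.log hbase)).exp).congr_deriv ?_
  simp only [Pi.mul_apply]
  field_simp
  ring

lemma deriv_fTilde_pos {x : ℝ} (hx : 2 < x) : 0 < deriv fTilde x := by
  rw [(hasDerivAt_fTilde hx).deriv]
  refine mul_pos (exp_pos _) ?_
  have hx0 : 0 < x := by linarith
  have hx2 : 0 < x - 2 := by linarith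
  have hq : 0 < (3 * x - 2) / (x - 2) := div_pos (by linarith) hx2
  have hlog := neg_two_mul_sub_one_div_lt_log_one_sub_two_div hx
  calc 0 < 2 / (x * (x - 2)) := by positivity
    _ = -4 / (x - 2) ^ 2 + (3 * x - 2) / (x - 2) * (-(2 * (x - 1) / (x * (x - 2))) + 2 / (x - 2)) := by
      field_simp; ring
    _ < -4 / (x - 2) ^ 2 + (3 * x - 2) / (x - 2) * (log (1 - 2 / x) + 2 / (x - 2)) := by
      gcongr

lemma strictMonoOn_fTilde : StrictMonoOn fTilde (Ioi 2) :=
  strictMonoOn_of_deriv_pos (convex_Ioi 2)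
    (fun _ hx => (hasDerivAt_fTilde hx).continuousAt.continuousWithinAt)
    (fun _ hx => deriv_fTilde_pos (by rwa [interior_Ioi] at hx))

lemma fTilde_three : fTilde 3 = 7 / 27 := by
  have hpow : (3 : ℝ) * log (1 - 2 / 3) = log ((1 / 3) ^ 3) := by
    rw [log_pow]; norm_num
  rw [fTilde, hpow, exp_log (by norm_num)]
  norm_num

/-- `f̃₁` is strictly increasing on `[3, ∞)`, with `f̃₁(3) = 7/27`; in particular,
`f̃₁(x) ≥ 7/27 > 1/4` for all real `x ≥ 3`. -/
theorem fTilde_properties :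
    StrictMonoOn fTilde (Set.Ici 3) ∧
    fTilde 3 = 7 / 27 ∧
    (∀ x : ℝ, 3 ≤ x → 7 / 27 ≤ fTilde x) ∧
    (1 : ℝ) / 4 < 7 / 27 := by
  have hmono : StrictMonoOn fTilde (Ici 3) :=
    strictMonoOn_fTilde.mono (Ici_subset_Ioi.mpr (by norm_num))
  refine ⟨hmono, fTilde_three, fun x hx => ?_, by norm_num⟩
  rw [← fTilde_three]
  exact hmono.monotoneOn self_mem_Ici hx hx
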